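/- arXiv:1607.05206 — 2 statements merged into one kernel-verified Lean document; each statement's English description precedes it below -/
import Mathlib

section
/- Let H be a real inner product space, M ∈ ℕ, Δτ > 0, and let (E^m)_{m=2}^M, (σ_m)_{m=2}^M be elements of H and let T be a linear map on H with an adjoint square-root structure, i.e. there is a linear S with ⟨T a, b⟩ = ⟨S a, S b⟩ for all a,b. Suppose ⟨T(E^m − E^{m-1}), E^{m-1/2}⟩ + Δτ ‖E^{m-1/2}‖² = ⟨σ_m, E^{m-1/2}⟩ for m = 2,…,M, where E^{m-1/2} = (E^m + E^{m-1})/2. Then Δτ ∑_{m=2}^M ‖E^{m-1/2}‖² ≤ ‖S E^1‖² + Δτ^{-1} ∑_{m=2}^M ‖σ_m‖². -/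
/-!
Testing the scheme against the midpoint `Eᵐ⁻¹ᐟ²` turns the `T`-term into the increment
`(‖S Eᵐ‖² − ‖S Eᵐ⁻¹‖²)/2` of the energy `‖S E‖²`. The source term is absorbed by Cauchy–Schwarz
and `2ab ≤ Δτ⁻¹ a² + Δτ b²`, which leaves half of `Δτ ‖Eᵐ⁻¹ᐟ²‖²` on the left; summing over `m`
the energies telescope to `‖S E¹‖² − ‖S Eᴹ‖² ≤ ‖S E¹‖²`.
-/

open Finset

theorem Finset.sum_Icc_two_sub_eq {G : Type*} [AddCommGroup G] (f : ℕ → G) {M : ℕ} (hM : 1 ≤ M) :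
    ∑ m ∈ Icc 2 M, (f (m - 1) - f m) = f 1 - f M := by
  induction M, hM using Nat.le_induction with
  | base => simp
  | succ n _ ih => rw [sum_Icc_succ_top (by omega), ih]; simp

theorem Finset.sum_Icc_two_sub_le {f : ℕ → ℝ} (hf : ∀ m, 0 ≤ f m) (M : ℕ) :
    ∑ m ∈ Icc 2 M, (f (m - 1) - f m) ≤ f 1 := by
  rcases Nat.eq_zero_or_pos M with rfl | hM
  · simpa using hf 1
  · linarith [sum_Icc_two_sub_eq f hM, hf M]

theorem two_mul_le_inv_mul_sq_add_mul_sq {a b ε : ℝ} (hε : 0 < ε) :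
    2 * a * b ≤ ε⁻¹ * a ^ 2 + ε * b ^ 2 := by
  have h : ε⁻¹ * a ^ 2 + ε * b ^ 2 - 2 * a * b = ε * (ε⁻¹ * a - b) ^ 2 := by
    field_simp
    ring
  nlinarith [mul_nonneg hε.le (sq_nonneg (ε⁻¹ * a - b))]

section

variable {H K : Type*} [NormedAddCommGroup H] [InnerProductSpace ℝ H]
  [NormedAddCommGroup K] [InnerProductSpace ℝ K]

theorem real_inner_le_inv_mul_norm_sq_add_mul_norm_sq {ε : ℝ} (hε : 0 < ε) (x y : H) :
    2 * inner ℝ x y ≤ ε⁻¹ * ‖x‖ ^ 2 + ε * ‖y‖ ^ 2 :=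
  calc 2 * inner ℝ x y ≤ 2 * ‖x‖ * ‖y‖ := by linarith [real_inner_le_norm x y]
    _ ≤ ε⁻¹ * ‖x‖ ^ 2 + ε * ‖y‖ ^ 2 := two_mul_le_inv_mul_sq_add_mul_sq hε

theorem inner_sub_midpoint_eq_of_inner_eq {T : H →ₗ[ℝ] H} {S : H →ₗ[ℝ] K}
    (hTS : ∀ a b, inner ℝ (T a) b = inner ℝ (S a) (S b)) (x y : H) :
    inner ℝ (T (x - y)) ((1 / 2 : ℝ) • (x + y)) = (‖S x‖ ^ 2 - ‖S y‖ ^ 2) / 2 := by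
  rw [hTS, map_smul, map_sub, map_add, real_inner_smul_right, inner_sub_left, inner_add_right,
    inner_add_right, real_inner_comm (S y), real_inner_self_eq_norm_sq,
    real_inner_self_eq_norm_sq]
  ring

theorem energy_step_le {T : H →ₗ[ℝ] H} {S : H →ₗ[ℝ] K}
    (hTS : ∀ a b, inner ℝ (T a) b = inner ℝ (S a) (S b)) {Δτ : ℝ} (hΔτ : 0 < Δτ) {x y σ : H}
    (heq : inner ℝ (T (x - y)) ((1 / 2 : ℝ) • (x + y)) + Δτ * ‖(1 / 2 : ℝ) • (x + y)‖ ^ 2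
      = inner ℝ σ ((1 / 2 : ℝ) • (x + y))) :
    Δτ * ‖(1 / 2 : ℝ) • (x + y)‖ ^ 2 ≤ ‖S y‖ ^ 2 - ‖S x‖ ^ 2 + Δτ⁻¹ * ‖σ‖ ^ 2 := by
  rw [inner_sub_midpoint_eq_of_inner_eq hTS] at heq
  linarith [real_inner_le_inv_mul_norm_sq_add_mul_norm_sq hΔτ σ ((1 / 2 : ℝ) • (x + y))]

end

/-- Abstract energy-telescoping estimate: if `⟨T a, b⟩ = ⟨S a, S b⟩` for all `a, b` and
`⟨T(Eᵐ − Eᵐ⁻¹), Eᵐ⁻¹ᐟ²⟩ + Δτ ‖Eᵐ⁻¹ᐟ²‖² = ⟨σₘ, Eᵐ⁻¹ᐟ²⟩` for `m = 2,…,M`, where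
`Eᵐ⁻¹ᐟ² = (Eᵐ + Eᵐ⁻¹)/2`, then
`Δτ ∑_{m=2}^M ‖Eᵐ⁻¹ᐟ²‖² ≤ ‖S E¹‖² + Δτ⁻¹ ∑_{m=2}^M ‖σₘ‖²`. -/
theorem stmt_6 {H : Type*} [NormedAddCommGroup H] [InnerProductSpace ℝ H]
    (T S : H →ₗ[ℝ] H) (hTS : ∀ a b : H, (inner ℝ (T a) b : ℝ) = inner ℝ (S a) (S b))
    (M : ℕ) (Δτ : ℝ) (hΔτ : 0 < Δτ) (E σ : ℕ → H)
    (heq : ∀ m, 2 ≤ m → m ≤ M →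
      (inner ℝ (T (E m - E (m - 1))) ((1 / 2 : ℝ) • (E m + E (m - 1))) : ℝ)
        + Δτ * ‖(1 / 2 : ℝ) • (E m + E (m - 1))‖ ^ 2
        = inner ℝ (σ m) ((1 / 2 : ℝ) • (E m + E (m - 1)))) :
    Δτ * ∑ m ∈ Finset.Icc 2 M, ‖(1 / 2 : ℝ) • (E m + E (m - 1))‖ ^ 2 ≤
      ‖S (E 1)‖ ^ 2 + Δτ⁻¹ * ∑ m ∈ Finset.Icc 2 M, ‖σ m‖ ^ 2 := by
  have hstep : ∀ m ∈ Icc 2 M, Δτ * ‖(1 / 2 : ℝ) • (E m + E (m - 1))‖ ^ 2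
      ≤ (‖S (E (m - 1))‖ ^ 2 - ‖S (E m)‖ ^ 2) + Δτ⁻¹ * ‖σ m‖ ^ 2 := fun m hm ↦
    energy_step_le hTS hΔτ (heq m (mem_Icc.1 hm).1 (mem_Icc.1 hm).2)
  calc Δτ * ∑ m ∈ Icc 2 M, ‖(1 / 2 : ℝ) • (E m + E (m - 1))‖ ^ 2
      ≤ ∑ m ∈ Icc 2 M, ((‖S (E (m - 1))‖ ^ 2 - ‖S (E m)‖ ^ 2) + Δτ⁻¹ * ‖σ m‖ ^ 2) := by
        rw [mul_sum]; exact sum_le_sum hstep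
    _ ≤ ‖S (E 1)‖ ^ 2 + Δτ⁻¹ * ∑ m ∈ Icc 2 M, ‖σ m‖ ^ 2 := by
        rw [sum_add_distrib, ← mul_sum]
        gcongr
        exact sum_Icc_two_sub_le (f := fun m ↦ ‖S (E m)‖ ^ 2) (fun _ ↦ sq_nonneg _) M
end

section
/- The series ∑_{k=1}^∞ (1 − e^{-2(kπ)⁴ Δτ})/(kπ)⁴ is bounded by C Δτ^{3/4} for all Δτ ∈ (0,1], where C is an absolute constant. -/
open Real Finset

/-!
Each term is at most `min (2 Δτ) k⁻⁴`, by `1 - e^{-y} ≤ y` and `1 - e^{-y} ≤ 1` together with `π ≥ 1`.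
With `N = ⌈Δτ^{-1/4}⌉`, the first bound for `k ≤ N` contributes `2NΔτ = O(Δτ^{3/4})`, and the second
for `k > N` contributes `∑_{k>N} k⁻⁴ ≤ 2/(N+1)³ = O(Δτ^{3/4})`. Substituting `Δτ = t⁴` makes
all exponents integral.
-/

theorem sum_Ico_inv_succ_pow_four_le {α : Type*} [Field α] [LinearOrder α] [IsStrictOrderedRing α]
    (m n : ℕ) : ∑ i ∈ Ico m n, (((i : α) + 1) ^ 4)⁻¹ ≤ 2 / ((m : α) + 1) ^ 3 := by
  have hterm : ∀ i ∈ Ico m n,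
      (((i : α) + 1) ^ 4)⁻¹ ≤ (((m : α) + 1) ^ 2)⁻¹ * (((i + 1 : ℕ) : α) ^ 2)⁻¹ := by
    intro i hi
    have hmi : (m : α) + 1 ≤ i + 1 := by exact_mod_cast Nat.succ_le_succ (mem_Ico.1 hi).1
    rw [← mul_inv, ← mul_pow, Nat.cast_succ, show (4 : ℕ) = 2 * 2 from rfl, pow_mul']
    gcongr
    rw [sq]
    exact mul_le_mul_of_nonneg_right hmi (by positivity)
  calc ∑ i ∈ Ico m n, (((i : α) + 1) ^ 4)⁻¹
      ≤ ∑ i ∈ Ico m n, (((m : α) + 1) ^ 2)⁻¹ * (((i + 1 : ℕ) : α) ^ 2)⁻¹ := sum_le_sum hterm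
    _ = (((m : α) + 1) ^ 2)⁻¹ * ∑ j ∈ Ioo m (n + 1), ((j : α) ^ 2)⁻¹ := by
      rw [← mul_sum, sum_Ico_add' (fun j : ℕ => ((j : α) ^ 2)⁻¹), Ico_add_one_left_eq_Ioo]
    _ ≤ (((m : α) + 1) ^ 2)⁻¹ * (2 / ((m : α) + 1)) := by gcongr; exact sum_Ioo_inv_sq_le _ _
    _ = 2 / ((m : α) + 1) ^ 3 := by field_simp

theorem tsum_pnat_le_of_le_of_le_inv_pow_four {f : ℕ+ → ℝ} {a : ℝ} (N : ℕ)
    (hf : ∀ k, 0 ≤ f k) (ha : ∀ k, f k ≤ a) (hb : ∀ k, f k ≤ ((k : ℝ) ^ 4)⁻¹) :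
    ∑' k, f k ≤ N * a + 2 / ((N : ℝ) + 1) ^ 3 := by
  rw [← Equiv.pnatEquivNat.symm.tsum_eq]
  set g : ℕ → ℝ := fun n => f (Equiv.pnatEquivNat.symm n)
  refine Real.tsum_le_of_sum_range_le (fun n => hf _) fun M => ?_
  calc ∑ n ∈ range M, g n
      ≤ ∑ n ∈ range (max M N), g n :=
        sum_le_sum_of_subset_of_nonneg (range_subset_range.2 (le_max_left _ _)) fun n _ _ => hf _
    _ = ∑ n ∈ range N, g n + ∑ n ∈ Ico N (max M N), g n :=
        (sum_range_add_sum_Ico _ (le_max_right _ _)).symm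
    _ ≤ N * a + ∑ n ∈ Ico N (max M N), (((n : ℝ) + 1) ^ 4)⁻¹ := by
        gcongr with n
        · simpa using sum_le_card_nsmul (range N) g a fun n _ => ha _
        · simpa [g] using hb n.succPNat
    _ ≤ N * a + 2 / ((N : ℝ) + 1) ^ 3 := by gcongr; exact sum_Ico_inv_succ_pow_four_le _ _

section

variable {x τ : ℝ}

theorem one_sub_exp_div_nonneg (hx : 0 ≤ x) (hτ : 0 ≤ τ) : 0 ≤ (1 - exp (-2 * x * τ)) / x := by
  refine div_nonneg (sub_nonneg.2 (exp_le_one_iff.2 ?_)) hx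
  have := mul_nonneg hx hτ
  linarith

theorem one_sub_exp_div_le_two_mul (hx : 0 < x) : (1 - exp (-2 * x * τ)) / x ≤ 2 * τ := by
  rw [div_le_iff₀ hx]
  linarith [add_one_le_exp (-2 * x * τ)]

theorem one_sub_exp_div_le_inv (hx : 0 < x) : (1 - exp (-2 * x * τ)) / x ≤ x⁻¹ := by
  rw [← one_div]
  exact div_le_div_of_nonneg_right (by linarith [exp_pos (-2 * x * τ)]) hx.le

end

theorem tsum_one_sub_exp_div_le (t : ℝ) (ht0 : 0 < t) (ht1 : t ≤ 1) :
    ∑' k : ℕ+, (1 - exp (-2 * ((k : ℝ) * π) ^ 4 * t ^ 4)) / ((k : ℝ) * π) ^ 4 ≤ 6 * t ^ 3 := by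
  set N := ⌈t⁻¹⌉₊
  have hN : t⁻¹ ≤ N := Nat.le_ceil _
  have hN' : (N : ℝ) < t⁻¹ + 1 := Nat.ceil_lt_add_one (by positivity)
  have hpow : ∀ k : ℕ+, 0 < ((k : ℝ) * π) ^ 4 := fun k => by positivity
  have hk : ∀ k : ℕ+, (k : ℝ) ^ 4 ≤ ((k : ℝ) * π) ^ 4 := fun k => by
    gcongr
    exact le_mul_of_one_le_right (by positivity) (by linarith [pi_gt_three])
  refine (tsum_pnat_le_of_le_of_le_inv_pow_four N
    (fun k => one_sub_exp_div_nonneg (hpow k).le (by positivity))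
    (fun k => one_sub_exp_div_le_two_mul (hpow k))
    (fun k => (one_sub_exp_div_le_inv (hpow k)).trans (inv_anti₀ (by positivity) (hk k)))).trans ?_
  have hsmall : (N : ℝ) * (2 * t ^ 4) ≤ 4 * t ^ 3 := by
    calc (N : ℝ) * (2 * t ^ 4) ≤ (t⁻¹ + 1) * (2 * t ^ 4) := by gcongr
      _ = 2 * t ^ 3 + 2 * t ^ 4 := by field_simp
      _ ≤ 4 * t ^ 3 := by nlinarith [pow_le_pow_of_le_one ht0.le ht1 (show 3 ≤ 4 by norm_num)]
  have hlarge : 2 / ((N : ℝ) + 1) ^ 3 ≤ 2 * t ^ 3 := by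
    calc 2 / ((N : ℝ) + 1) ^ 3 ≤ 2 / t⁻¹ ^ 3 := by gcongr; linarith
      _ = 2 * t ^ 3 := by rw [inv_pow, div_inv_eq_mul]
  linarith

/-- There is an absolute constant `C` such that for all `Δτ ∈ (0,1]`,
`∑_{k=1}^∞ (1 − e^{-2(kπ)⁴ Δτ})/(kπ)⁴ ≤ C Δτ^{3/4}`. -/
theorem stmt_12 :
    ∃ C : ℝ, 0 < C ∧ ∀ Δτ : ℝ, 0 < Δτ → Δτ ≤ 1 →
      (∑' k : ℕ+, (1 - Real.exp (-2 * ((k : ℝ) * Real.pi) ^ 4 * Δτ)) /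
          ((k : ℝ) * Real.pi) ^ 4) ≤ C * Δτ ^ (3 / 4 : ℝ) := by
  refine ⟨6, by norm_num, fun Δτ h0 h1 => ?_⟩
  obtain ⟨t, ht0, ht1, rfl⟩ : ∃ t : ℝ, 0 < t ∧ t ≤ 1 ∧ Δτ = t ^ 4 :=
    ⟨Δτ ^ (1 / 4 : ℝ), rpow_pos_of_pos h0 _, rpow_le_one h0.le h1 (by norm_num), by
      rw [← rpow_natCast, ← rpow_mul h0.le]; norm_num⟩
  have h34 : (t ^ 4) ^ (3 / 4 : ℝ) = t ^ 3 := by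
    rw [← rpow_natCast, ← rpow_mul ht0.le]; norm_num
  rw [h34]
  exact tsum_one_sub_exp_div_le t ht0 ht1
end
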